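/- arXiv:1210.5640 — 2 statements merged into one kernel-verified Lean document; each statement's English description precedes it below -/
import Mathlib

section
/- For c = (c₁,c₂,c₃) in the cone C with μ(c) = min(c₁+c₂−c₃,c₃−c₁,c₃−c₂) ≥ m ≥ 1, the subgroup P_c of lower-triangular-type matrices is normal-compatible in the sense: N_c is a normal subgroup of N_{c−mρ}, where for d = (d₁,d₂,d₃), N_d is the group of 3×3 lower unitriangular matrices over O with (2,1)-entry in 𝔪^{d₁}, (3,2)-entry in 𝔪^{d₂}, and (3,1)-entry in 𝔪^{d₃}. -/
/-!
Write an element of `N_d` as `lowerUnitri a b c = [[1,0,0],[a,1,0],[c,b,1]]`. Then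
`(a,b,c)·(a',b',c') = (a+a', b+b', c+b a'+c')`, the inverse of `(a,b,c)` is `(-a,-b,ab-c)`,
and conjugating `(x,y,z)` by `(a,b,c)` gives `(x, y, z + b x - a y)`. Since
`𝔪^i 𝔪^j ⊆ 𝔪^k` whenever `k ≤ i + j`, closure of `N_d` needs `d₃ ≤ d₁ + d₂`, and normality
of `N_c` in `N_{c-mρ}` needs `c₃ ≤ (c₂ - m) + c₁` and `c₃ ≤ (c₁ - m) + c₂`, i.e.
`m ≤ c₁ + c₂ - c₃`.
-/

open Matrix

/-- For `d = (d₁,d₂,d₃)`, the set `N_d` of lower unitriangular matrices in `GL₃(O)`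
with `(2,1)`-entry in `𝔪^{d₁}`, `(3,2)`-entry in `𝔪^{d₂}` and `(3,1)`-entry in
`𝔪^{d₃}` (indices 1-based; `𝔪 = (π)`). -/
def nSet {O : Type*} [CommRing O] (π : O) (d₁ d₂ d₃ : ℕ) :
    Set (GL (Fin 3) O) :=
  {g | g.val 0 0 = 1 ∧ g.val 1 1 = 1 ∧ g.val 2 2 = 1 ∧
    g.val 0 1 = 0 ∧ g.val 0 2 = 0 ∧ g.val 1 2 = 0 ∧
    g.val 1 0 ∈ (Ideal.span {π} : Ideal O) ^ d₁ ∧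
    g.val 2 1 ∈ (Ideal.span {π} : Ideal O) ^ d₂ ∧
    g.val 2 0 ∈ (Ideal.span {π} : Ideal O) ^ d₃}

theorem Ideal.mul_mem_pow_of_le_add {R : Type*} [CommSemiring R] {I : Ideal R} {x y : R}
    {m n k : ℕ} (hx : x ∈ I ^ m) (hy : y ∈ I ^ n) (hk : k ≤ m + n) : x * y ∈ I ^ k :=
  Ideal.pow_le_pow_right hk (pow_add I m n ▸ Ideal.mul_mem_mul hx hy)

section LowerUnitriangular

variable {R : Type*} [CommRing R]

def lowerUnitri (a b c : R) : Matrix (Fin 3) (Fin 3) R :=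
  !![1, 0, 0; a, 1, 0; c, b, 1]

theorem lowerUnitri_zero : lowerUnitri (0 : R) 0 0 = 1 := by
  ext i j
  fin_cases i <;> fin_cases j <;> rfl

theorem lowerUnitri_mul (a b c a' b' c' : R) :
    lowerUnitri a b c * lowerUnitri a' b' c' =
      lowerUnitri (a + a') (b + b') (c + b * a' + c') := by
  ext i j
  fin_cases i <;> fin_cases j <;> simp [lowerUnitri, Matrix.mul_apply, Fin.sum_univ_three]

theorem val_inv_eq_lowerUnitri {g : GL (Fin 3) R} {a b c : R}
    (hg : g.val = lowerUnitri a b c) : (g⁻¹).val = lowerUnitri (-a) (-b) (a * b - c) := by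
  refine Units.inv_eq_of_mul_eq_one_right ?_
  rw [hg, lowerUnitri_mul, ← lowerUnitri_zero]
  congr 1 <;> ring

end LowerUnitriangular

section NSet

variable {O : Type*} [CommRing O] (π : O)

theorem mem_nSet_iff {d₁ d₂ d₃ : ℕ} {g : GL (Fin 3) O} :
    g ∈ nSet π d₁ d₂ d₃ ↔
      ∃ a ∈ Ideal.span {π} ^ d₁, ∃ b ∈ Ideal.span {π} ^ d₂, ∃ c ∈ Ideal.span {π} ^ d₃,
        g.val = lowerUnitri a b c := by
  constructor
  · rintro ⟨h00, h11, h22, h01, h02, h12, ha, hb, hc⟩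
    refine ⟨_, ha, _, hb, _, hc, ?_⟩
    ext i j
    fin_cases i <;> fin_cases j <;> simp [lowerUnitri, *]
  · rintro ⟨a, ha, b, hb, c, hc, hg⟩
    simp [nSet, hg, lowerUnitri, ha, hb, hc]

theorem one_mem_nSet (d₁ d₂ d₃ : ℕ) : (1 : GL (Fin 3) O) ∈ nSet π d₁ d₂ d₃ :=
  (mem_nSet_iff π).2 ⟨0, zero_mem _, 0, zero_mem _, 0, zero_mem _, lowerUnitri_zero.symm⟩

variable {π}

theorem nSet_subset_nSet {d₁ d₂ d₃ e₁ e₂ e₃ : ℕ} (h₁ : e₁ ≤ d₁) (h₂ : e₂ ≤ d₂)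
    (h₃ : e₃ ≤ d₃) : nSet π d₁ d₂ d₃ ⊆ nSet π e₁ e₂ e₃ := by
  rintro g ⟨h00, h11, h22, h01, h02, h12, ha, hb, hc⟩
  exact ⟨h00, h11, h22, h01, h02, h12, Ideal.pow_le_pow_right h₁ ha,
    Ideal.pow_le_pow_right h₂ hb, Ideal.pow_le_pow_right h₃ hc⟩

theorem mul_mem_nSet {d₁ d₂ d₃ : ℕ} (hd : d₃ ≤ d₁ + d₂) {g h : GL (Fin 3) O}
    (hg : g ∈ nSet π d₁ d₂ d₃) (hh : h ∈ nSet π d₁ d₂ d₃) : g * h ∈ nSet π d₁ d₂ d₃ := by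
  obtain ⟨a, ha, b, hb, c, hc, hg⟩ := (mem_nSet_iff π).1 hg
  obtain ⟨a', ha', b', hb', c', hc', hh⟩ := (mem_nSet_iff π).1 hh
  refine (mem_nSet_iff π).2 ⟨_, add_mem ha ha', _, add_mem hb hb', _,
    add_mem (add_mem hc (Ideal.mul_mem_pow_of_le_add hb ha' (by omega))) hc', ?_⟩
  rw [Units.val_mul, hg, hh, lowerUnitri_mul]

theorem inv_mem_nSet {d₁ d₂ d₃ : ℕ} (hd : d₃ ≤ d₁ + d₂) {g : GL (Fin 3) O}
    (hg : g ∈ nSet π d₁ d₂ d₃) : g⁻¹ ∈ nSet π d₁ d₂ d₃ := by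
  obtain ⟨a, ha, b, hb, c, hc, hg⟩ := (mem_nSet_iff π).1 hg
  exact (mem_nSet_iff π).2 ⟨_, neg_mem ha, _, neg_mem hb, _,
    sub_mem (Ideal.mul_mem_pow_of_le_add ha hb hd) hc, val_inv_eq_lowerUnitri hg⟩

theorem conj_mem_nSet {c₁ c₂ c₃ e₁ e₂ e₃ : ℕ} (h₁ : c₃ ≤ e₂ + c₁) (h₂ : c₃ ≤ e₁ + c₂)
    {g n : GL (Fin 3) O} (hg : g ∈ nSet π e₁ e₂ e₃) (hn : n ∈ nSet π c₁ c₂ c₃) :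
    g * n * g⁻¹ ∈ nSet π c₁ c₂ c₃ := by
  obtain ⟨a, ha, b, hb, c, -, hg⟩ := (mem_nSet_iff π).1 hg
  obtain ⟨x, hx, y, hy, z, hz, hn⟩ := (mem_nSet_iff π).1 hn
  have hconj : (g * n * g⁻¹).val = lowerUnitri x y (z + (b * x - a * y)) := by
    rw [Units.val_mul, Units.val_mul, val_inv_eq_lowerUnitri hg, hg, hn, lowerUnitri_mul,
      lowerUnitri_mul]
    congr 1 <;> ring
  exact (mem_nSet_iff π).2 ⟨x, hx, y, hy, _, add_mem hz (sub_mem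
    (Ideal.mul_mem_pow_of_le_add hb hx h₁)
    (Ideal.mul_mem_pow_of_le_add ha hy h₂)), hconj⟩

end NSet

theorem stmt_11_general (O : Type*) [CommRing O]
    (π : O) (c₁ c₂ c₃ m : ℕ)
    (h3 : c₃ ≤ c₁ + c₂)
    (hμ : m ≤ min (c₁ + c₂ - c₃) (min (c₃ - c₁) (c₃ - c₂))) :
    (1 ∈ nSet π c₁ c₂ c₃) ∧
    (∀ a ∈ nSet π c₁ c₂ c₃, ∀ b ∈ nSet π c₁ c₂ c₃, a * b ∈ nSet π c₁ c₂ c₃) ∧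
    (∀ a ∈ nSet π c₁ c₂ c₃, a⁻¹ ∈ nSet π c₁ c₂ c₃) ∧
    (1 ∈ nSet π (c₁ - m) (c₂ - m) (c₃ - m)) ∧
    (∀ a ∈ nSet π (c₁ - m) (c₂ - m) (c₃ - m), ∀ b ∈ nSet π (c₁ - m) (c₂ - m) (c₃ - m),
      a * b ∈ nSet π (c₁ - m) (c₂ - m) (c₃ - m)) ∧
    (∀ a ∈ nSet π (c₁ - m) (c₂ - m) (c₃ - m), a⁻¹ ∈ nSet π (c₁ - m) (c₂ - m) (c₃ - m)) ∧
    nSet π c₁ c₂ c₃ ⊆ nSet π (c₁ - m) (c₂ - m) (c₃ - m) ∧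
    (∀ g ∈ nSet π (c₁ - m) (c₂ - m) (c₃ - m), ∀ n ∈ nSet π c₁ c₂ c₃,
      g * n * g⁻¹ ∈ nSet π c₁ c₂ c₃) := by
  obtain ⟨hμ₁, hμ₂, hμ₃⟩ : m ≤ c₁ + c₂ - c₃ ∧ m ≤ c₃ - c₁ ∧ m ≤ c₃ - c₂ := by
    simpa only [le_min_iff] using hμ
  have hcone : c₃ - m ≤ (c₁ - m) + (c₂ - m) := by omega
  exact ⟨one_mem_nSet π _ _ _, fun _ ha _ hb ↦ mul_mem_nSet h3 ha hb,
    fun _ ha ↦ inv_mem_nSet h3 ha, one_mem_nSet π _ _ _,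
    fun _ ha _ hb ↦ mul_mem_nSet hcone ha hb, fun _ ha ↦ inv_mem_nSet hcone ha,
    nSet_subset_nSet (by omega) (by omega) (by omega),
    fun _ hg _ hn ↦ conj_mem_nSet (by omega) (by omega) hg hn⟩

/-- For `c` in the cone with `μ(c) ≥ m ≥ 1`, both `N_c` and `N_{c−mρ}` are subgroups of
`GL₃(O)`, `N_c ⊆ N_{c−mρ}`, and `N_c` is a normal subgroup of `N_{c−mρ}`. -/
theorem stmt_11 (O : Type*) [CommRing O] [IsDomain O] [IsDiscreteValuationRing O]
    (π : O) (hπ : Irreducible π) (c₁ c₂ c₃ m : ℕ)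
    (h1 : c₁ ≤ c₃) (h2 : c₂ ≤ c₃) (h3 : c₃ ≤ c₁ + c₂) (hm : 1 ≤ m)
    (hμ : m ≤ min (c₁ + c₂ - c₃) (min (c₃ - c₁) (c₃ - c₂))) :
    (1 ∈ nSet π c₁ c₂ c₃) ∧
    (∀ a ∈ nSet π c₁ c₂ c₃, ∀ b ∈ nSet π c₁ c₂ c₃, a * b ∈ nSet π c₁ c₂ c₃) ∧
    (∀ a ∈ nSet π c₁ c₂ c₃, a⁻¹ ∈ nSet π c₁ c₂ c₃) ∧
    (1 ∈ nSet π (c₁ - m) (c₂ - m) (c₃ - m)) ∧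
    (∀ a ∈ nSet π (c₁ - m) (c₂ - m) (c₃ - m), ∀ b ∈ nSet π (c₁ - m) (c₂ - m) (c₃ - m),
      a * b ∈ nSet π (c₁ - m) (c₂ - m) (c₃ - m)) ∧
    (∀ a ∈ nSet π (c₁ - m) (c₂ - m) (c₃ - m), a⁻¹ ∈ nSet π (c₁ - m) (c₂ - m) (c₃ - m)) ∧
    nSet π c₁ c₂ c₃ ⊆ nSet π (c₁ - m) (c₂ - m) (c₃ - m) ∧
    (∀ g ∈ nSet π (c₁ - m) (c₂ - m) (c₃ - m), ∀ n ∈ nSet π c₁ c₂ c₃,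
      g * n * g⁻¹ ∈ nSet π c₁ c₂ c₃) :=
  stmt_11_general O π c₁ c₂ c₃ m h3 hμ
end

section
/- Define a : ℕ₀³ → ℕ₀ by a(m,k,ℓ) = ℓ−3k+1 if ℓ ≥ 3k and k = m; a(m,k,ℓ) = 1 if ℓ ≥ 2m+k and k > m; and a(m,k,ℓ) = 0 otherwise. For k = m ≥ 0 and ℓ ≥ 3k, the set of c = (c₁,c₂,c₃) in the cone C with c₃ = ℓ, c₁+c₂−c₃ = k, and min(c₁+c₂−c₃, c₃−c₁, c₃−c₂) = m is exactly {(2k+i, ℓ−k−i, ℓ) : 0 ≤ i ≤ ℓ−3k}, which has cardinality ℓ−3k+1 = a(m,k,ℓ). -/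
/-- The cone `C = {(c₁,c₂,c₃) ∈ ℕ₀³ : c₁,c₂ ≤ c₃ ≤ c₁+c₂}`. -/
def inCone (c : ℕ × ℕ × ℕ) : Prop :=
  c.1 ≤ c.2.2 ∧ c.2.1 ≤ c.2.2 ∧ c.2.2 ≤ c.1 + c.2.1

/-- `μ(c) = min(c₁+c₂−c₃, c₃−c₁, c₃−c₂)`. -/
def muInv (c : ℕ × ℕ × ℕ) : ℕ :=
  min (c.1 + c.2.1 - c.2.2) (min (c.2.2 - c.1) (c.2.2 - c.2.1))

/-- The multiplicity function `a(m,k,ℓ)`. -/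
def aFun (m k ℓ : ℕ) : ℕ :=
  if k = m ∧ 3 * k ≤ ℓ then ℓ - 3 * k + 1
  else if m < k ∧ 2 * m + k ≤ ℓ then 1
  else 0

/-- For `k = m` and `ℓ ≥ 3k`, the set of `c` in the cone with `λ(c) = ℓ`, `κ(c) = k`
and `μ(c) = m` is exactly `{(2k+i, ℓ−k−i, ℓ) : 0 ≤ i ≤ ℓ−3k}`, of cardinality
`ℓ − 3k + 1 = a(m,k,ℓ)`. -/
theorem stmt_15 (m k ℓ : ℕ) (hkm : k = m) (hl : 3 * k ≤ ℓ) :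
    {c : ℕ × ℕ × ℕ | inCone c ∧ c.2.2 = ℓ ∧ c.1 + c.2.1 - c.2.2 = k ∧ muInv c = m} =
      {c : ℕ × ℕ × ℕ | ∃ i ≤ ℓ - 3 * k, c = (2 * k + i, ℓ - k - i, ℓ)} ∧
    Nat.card {c : ℕ × ℕ × ℕ | inCone c ∧ c.2.2 = ℓ ∧ c.1 + c.2.1 - c.2.2 = k ∧
        muInv c = m} = ℓ - 3 * k + 1 ∧
    ℓ - 3 * k + 1 = aFun m k ℓ := by
  subst hkm
  have hset : {c : ℕ × ℕ × ℕ | inCone c ∧ c.2.2 = ℓ ∧ c.1 + c.2.1 - c.2.2 = k ∧ muInv c = k} =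
      {c : ℕ × ℕ × ℕ | ∃ i ≤ ℓ - 3 * k, c = (2 * k + i, ℓ - k - i, ℓ)} := by
    ext ⟨a, b, c⟩
    simp only [Set.mem_setOf_eq, inCone, muInv, Prod.mk.injEq]
    constructor
    · rintro ⟨⟨h1, h2, h3⟩, rfl, h4, h5⟩
      exact ⟨a - 2 * k, by omega, by omega, by omega, rfl⟩
    · rintro ⟨i, hi, rfl, rfl, rfl⟩
      refine ⟨⟨by omega, by omega, by omega⟩, rfl, by omega, by omega⟩
  refine ⟨hset, ?_, by simp [aFun, hl]⟩
  rw [hset]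
  have himg : {c : ℕ × ℕ × ℕ | ∃ i ≤ ℓ - 3 * k, c = (2 * k + i, ℓ - k - i, ℓ)} =
      (fun i : ℕ => ((2 * k + i, ℓ - k - i, ℓ) : ℕ × ℕ × ℕ)) '' Set.Iic (ℓ - 3 * k) := by
    ext c
    simp only [Set.mem_setOf_eq, Set.mem_image, Set.mem_Iic]
    constructor
    · rintro ⟨i, hi, rfl⟩; exact ⟨i, hi, rfl⟩
    · rintro ⟨i, hi, rfl⟩; exact ⟨i, hi, rfl⟩
  rw [himg, Nat.card_image_of_injective (fun x y h => by
    simpa using congrArg (fun p : ℕ × ℕ × ℕ => p.1) h)]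
  simp [Nat.card_eq_card_toFinset]
end
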